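/- arXiv:2207.08335 — 2 statements merged into one kernel-verified Lean document; each statement's English description precedes it below -/
import Mathlib

section
/- The trade-off function of a mixture against two indexed families: for any measurable rejection rule φ and mixture distributions X_I, X'_I as above, if f is convex and non-increasing and 1 - E[φ(X'_i)] ≥ f(E[φ(X_i)]) for each i, then 1 - E[φ(X'_I)] ≥ f(E[φ(X_I)]). -/
/- Testing is linear in the distribution: `E[φ(X_I)] = ∑ w_i E[φ(X_i)]`, and likewise for `X'`.
Since each `E[φ(X_i)]` lies in `[0,1]`, Jensen's inequality for the convex `f` gives
`f(E[φ(X_I)]) ≤ ∑ w_i f(E[φ(X_i)]) ≤ ∑ w_i (1 - E[φ(X'_i)]) = 1 - E[φ(X'_I)]`. -/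

open Finset

def IsPMF {Ω : Type*} [Fintype Ω] (p : Ω → ℝ) : Prop :=
  (∀ x, 0 ≤ p x) ∧ ∑ x, p x = 1

lemma IsPMF.sum_mul_mem_Icc {Ω : Type*} [Fintype Ω] {p : Ω → ℝ} (hp : IsPMF p)
    {φ : Ω → ℝ} (hφ : ∀ x, φ x ∈ Set.Icc (0:ℝ) 1) :
    ∑ x, p x * φ x ∈ Set.Icc (0:ℝ) 1 := by
  refine ⟨sum_nonneg fun x _ => mul_nonneg (hp.1 x) (hφ x).1, ?_⟩
  calc ∑ x, p x * φ x ≤ ∑ x, p x :=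
        sum_le_sum fun x _ => mul_le_of_le_one_right (hp.1 x) (hφ x).2
    _ = 1 := hp.2

lemma sum_mixture_mul {ι Ω R : Type*} [Fintype ι] [Fintype Ω] [CommSemiring R]
    (w : ι → R) (X : ι → Ω → R) (φ : Ω → R) :
    ∑ x, (∑ i, w i * X i x) * φ x = ∑ i, w i * ∑ x, X i x * φ x := by
  simp only [sum_mul, mul_sum, mul_assoc]
  exact sum_comm

lemma IsPMF.sum_mul_one_sub {ι : Type*} [Fintype ι] {w : ι → ℝ} (hw : IsPMF w) (a : ι → ℝ) :
    ∑ i, w i * (1 - a i) = 1 - ∑ i, w i * a i := by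
  simp only [mul_sub, mul_one, sum_sub_distrib, hw.2]

theorem tradeoff_mixture_rule_general {ι Ω : Type*} [Fintype ι] [Fintype Ω]
    (w : ι → ℝ) (hw : IsPMF w)
    (X X' : ι → Ω → ℝ) (hX : ∀ i, IsPMF (X i))
    (φ : Ω → ℝ) (hφ : ∀ x, φ x ∈ Set.Icc (0:ℝ) 1)
    (f : ℝ → ℝ)
    (hconv : ConvexOn ℝ (Set.Icc (0:ℝ) 1) f)
    (h : ∀ i, f (∑ x, X i x * φ x) ≤ 1 - ∑ x, X' i x * φ x) :
    f (∑ x, (∑ i, w i * X i x) * φ x) ≤ 1 - ∑ x, (∑ i, w i * X' i x) * φ x := by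
  rw [sum_mixture_mul, sum_mixture_mul, ← hw.sum_mul_one_sub]
  calc f (∑ i, w i * ∑ x, X i x * φ x) ≤ ∑ i, w i * f (∑ x, X i x * φ x) :=
        hconv.map_sum_le (fun i _ => hw.1 i) hw.2 fun i _ => (hX i).sum_mul_mem_Icc hφ
    _ ≤ ∑ i, w i * (1 - ∑ x, X' i x * φ x) :=
        sum_le_sum fun i _ => mul_le_mul_of_nonneg_left (h i) (hw.1 i)

/-- Key step of joint convexity of `f`-DP: if a rejection rule `φ` satisfies
`1 - E[φ(X'_i)] ≥ f(E[φ(X_i)])` for each `i`, and `f` is convex and non-increasing,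
then the same inequality holds for the mixtures `X_I`, `X'_I`. -/
theorem tradeoff_mixture_rule {ι Ω : Type*} [Fintype ι] [Fintype Ω]
    (w : ι → ℝ) (hw : IsPMF w)
    (X X' : ι → Ω → ℝ) (hX : ∀ i, IsPMF (X i)) (hX' : ∀ i, IsPMF (X' i))
    (φ : Ω → ℝ) (hφ : ∀ x, φ x ∈ Set.Icc (0:ℝ) 1)
    (f : ℝ → ℝ)
    (hconv : ConvexOn ℝ (Set.Icc (0:ℝ) 1) f)
    (hanti : AntitoneOn f (Set.Icc (0:ℝ) 1))
    (h : ∀ i, f (∑ x, X i x * φ x) ≤ 1 - ∑ x, X' i x * φ x) :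
    f (∑ x, (∑ i, w i * X i x) * φ x) ≤ 1 - ∑ x, (∑ i, w i * X' i x) * φ x :=
  tradeoff_mixture_rule_general w hw X X' hX φ hφ f hconv h
end

section
/- Coupling property of f-DP: let f be a trade-off function and X, X', Y, Y' random variables with T(X,X') ≥ f and T(Y,Y') ≥ f pointwise. Assume (Blackwell's theorem) that whenever T(P,P') ≤ T(X,X') there is a Markov kernel K with K(P) = X and K(P') = X' in distribution, and that f = T(P,P') for some pair (P,P'). Then there exist a coupling (X̃,Ỹ) of X and Y and a coupling (X̃',Ỹ') of X' and Y' such that T((X̃,Ỹ),(X̃',Ỹ')) ≥ f pointwise. -/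
/-! Blackwell's theorem yields kernels `K_X`, `K_Y` carrying `(P, P')` to `(X, X')` and to
`(Y, Y')`. Feeding one sample of `P` (resp. `P'`) to both kernels, run independently, gives
couplings `W`, `W'` that are the images of `P`, `P'` under a single kernel, so by data
processing `T(W, W') ≥ T(P, P') = f`. -/

open Finset

def IsKernel {X Y : Type*} [Fintype X] [Fintype Y] (K : X → Y → ℝ) : Prop :=
  ∀ x, IsPMF (K x)

def push {X Y : Type*} [Fintype X] [Fintype Y] (K : X → Y → ℝ) (p : X → ℝ) : Y → ℝ :=
  fun y => ∑ x, p x * K x y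

noncomputable def tradeoff {Ω : Type*} [Fintype Ω] (p q : Ω → ℝ) (α : ℝ) : ℝ :=
  sInf { β | ∃ φ : Ω → ℝ, (∀ x, φ x ∈ Set.Icc (0:ℝ) 1) ∧
    (∑ x, p x * φ x) ≤ α ∧ β = 1 - ∑ x, q x * φ x }

section Kernels

variable {Ω Ω' : Type*} [Fintype Ω] [Fintype Ω']

lemma sum_push_mul (K : Ω → Ω' → ℝ) (p : Ω → ℝ) (φ : Ω' → ℝ) :
    ∑ y, push K p y * φ y = ∑ x, p x * ∑ y, K x y * φ y := by
  simp only [push, Finset.mul_sum, Finset.sum_mul, mul_assoc]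
  exact Finset.sum_comm

lemma IsPMF.sum_mul_le_one {q : Ω → ℝ} (hq : IsPMF q) {φ : Ω → ℝ}
    (hφ : ∀ x, φ x ∈ Set.Icc (0:ℝ) 1) : ∑ x, q x * φ x ≤ 1 :=
  calc ∑ x, q x * φ x ≤ ∑ x, q x :=
        Finset.sum_le_sum fun x _ => mul_le_of_le_one_right (hq.1 x) (hφ x).2
    _ = 1 := hq.2

lemma IsKernel.sum_mul_mem_Icc {K : Ω → Ω' → ℝ} (hK : IsKernel K) {φ : Ω' → ℝ}
    (hφ : ∀ y, φ y ∈ Set.Icc (0:ℝ) 1) (x : Ω) : ∑ y, K x y * φ y ∈ Set.Icc (0:ℝ) 1 :=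
  ⟨Finset.sum_nonneg fun y _ => mul_nonneg ((hK x).1 y) (hφ y).1, (hK x).sum_mul_le_one hφ⟩

lemma IsKernel.isPMF_push {K : Ω → Ω' → ℝ} (hK : IsKernel K) {p : Ω → ℝ} (hp : IsPMF p) :
    IsPMF (push K p) := by
  refine ⟨fun y => Finset.sum_nonneg fun x _ => mul_nonneg (hp.1 x) ((hK x).1 y), ?_⟩
  simpa [(hK _).2, hp.2] using sum_push_mul K p 1

/-- Data-processing inequality: a test on the output of `K`, precomposed with `K`, is a test on
its input with the same type I and type II errors. -/
lemma IsKernel.tradeoff_le_tradeoff_push {K : Ω → Ω' → ℝ} (hK : IsKernel K) (p : Ω → ℝ)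
    {q : Ω → ℝ} (hq : IsPMF q) {α : ℝ} (hα : 0 ≤ α) :
    tradeoff p q α ≤ tradeoff (push K p) (push K q) α := by
  apply csInf_le_csInf
  · refine ⟨0, ?_⟩
    rintro β ⟨φ, hφ, -, rfl⟩
    exact sub_nonneg.2 (hq.sum_mul_le_one hφ)
  · exact ⟨1, 0, fun _ => by simp, by simpa using hα, by simp⟩
  · rintro β ⟨φ, hφ, hle, rfl⟩
    refine ⟨fun x => ∑ y, K x y * φ y, hK.sum_mul_mem_Icc hφ, ?_, ?_⟩
    · rwa [← sum_push_mul]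
    · rw [sum_push_mul]

end Kernels

section ProductKernel

variable {Ω Ω₁ Ω₂ : Type*} [Fintype Ω] [Fintype Ω₁] [Fintype Ω₂]

def prodKernel (K₁ : Ω → Ω₁ → ℝ) (K₂ : Ω → Ω₂ → ℝ) : Ω → Ω₁ × Ω₂ → ℝ :=
  fun ω z => K₁ ω z.1 * K₂ ω z.2

lemma IsKernel.prod {K₁ : Ω → Ω₁ → ℝ} {K₂ : Ω → Ω₂ → ℝ} (h₁ : IsKernel K₁)
    (h₂ : IsKernel K₂) : IsKernel (prodKernel K₁ K₂) := fun ω =>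
  ⟨fun z => mul_nonneg ((h₁ ω).1 z.1) ((h₂ ω).1 z.2), by
    simp [prodKernel, Fintype.sum_prod_type, ← Finset.mul_sum, (h₁ ω).2, (h₂ ω).2]⟩

lemma sum_snd_push_prodKernel (K₁ : Ω → Ω₁ → ℝ) {K₂ : Ω → Ω₂ → ℝ} (h₂ : IsKernel K₂)
    (p : Ω → ℝ) (x : Ω₁) : ∑ y, push (prodKernel K₁ K₂) p (x, y) = push K₁ p x := by
  simp only [push, prodKernel]
  rw [Finset.sum_comm]
  simp [← Finset.mul_sum, (h₂ _).2]

lemma sum_fst_push_prodKernel {K₁ : Ω → Ω₁ → ℝ} (h₁ : IsKernel K₁) (K₂ : Ω → Ω₂ → ℝ)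
    (p : Ω → ℝ) (y : Ω₂) : ∑ x, push (prodKernel K₁ K₂) p (x, y) = push K₂ p y := by
  simp only [push, prodKernel]
  rw [Finset.sum_comm]
  simp [← Finset.mul_sum, ← Finset.sum_mul, (h₁ _).2]

end ProductKernel

theorem fDP_coupling_general {ΩX ΩY ΩP : Type*} [Fintype ΩX] [Fintype ΩY] [Fintype ΩP]
    (f : ℝ → ℝ)
    (X X' : ΩX → ℝ)
    (Y Y' : ΩY → ℝ)
    (P P' : ΩP → ℝ) (hP : IsPMF P) (hP' : IsPMF P')
    -- `f` is realized as the trade-off function of the pair `(P, P')`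
    (hfP : ∀ α ∈ Set.Icc (0:ℝ) 1, f α = tradeoff P P' α)
    -- `T(X,X') ≥ f` and `T(Y,Y') ≥ f`
    (hfX : ∀ α ∈ Set.Icc (0:ℝ) 1, f α ≤ tradeoff X X' α)
    (hfY : ∀ α ∈ Set.Icc (0:ℝ) 1, f α ≤ tradeoff Y Y' α)
    -- Blackwell's theorem, assumed for the two relevant pairs
    (hBlackwellX : (∀ α ∈ Set.Icc (0:ℝ) 1, tradeoff P P' α ≤ tradeoff X X' α) →
      ∃ K : ΩP → ΩX → ℝ, IsKernel K ∧ push K P = X ∧ push K P' = X')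
    (hBlackwellY : (∀ α ∈ Set.Icc (0:ℝ) 1, tradeoff P P' α ≤ tradeoff Y Y' α) →
      ∃ K : ΩP → ΩY → ℝ, IsKernel K ∧ push K P = Y ∧ push K P' = Y') :
    ∃ W W' : ΩX × ΩY → ℝ, IsPMF W ∧ IsPMF W' ∧
      -- `W` is a coupling of `X` and `Y`
      (∀ x, ∑ y, W (x, y) = X x) ∧ (∀ y, ∑ x, W (x, y) = Y y) ∧
      -- `W'` is a coupling of `X'` and `Y'`
      (∀ x, ∑ y, W' (x, y) = X' x) ∧ (∀ y, ∑ x, W' (x, y) = Y' y) ∧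
      -- `T((X̃,Ỹ), (X̃',Ỹ')) ≥ f`
      (∀ α ∈ Set.Icc (0:ℝ) 1, f α ≤ tradeoff W W' α) := by
  obtain ⟨KX, hKX, hKXP, hKXP'⟩ := hBlackwellX fun α hα => hfP α hα ▸ hfX α hα
  obtain ⟨KY, hKY, hKYP, hKYP'⟩ := hBlackwellY fun α hα => hfP α hα ▸ hfY α hα
  have hK := hKX.prod hKY
  refine ⟨push (prodKernel KX KY) P, push (prodKernel KX KY) P', hK.isPMF_push hP,
    hK.isPMF_push hP', fun x => ?_, fun y => ?_, fun x => ?_, fun y => ?_, fun α hα => ?_⟩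
  · rw [sum_snd_push_prodKernel KX hKY, hKXP]
  · rw [sum_fst_push_prodKernel hKX KY, hKYP]
  · rw [sum_snd_push_prodKernel KX hKY, hKXP']
  · rw [sum_fst_push_prodKernel hKX KY, hKYP']
  · exact hfP α hα ▸ hK.tradeoff_le_tradeoff_push P hP' hα.1

/-- Coupling property of `f`-DP: if `T(X,X') ≥ f` and `T(Y,Y') ≥ f`, where
`f = T(P,P')` is realized by the pair `(P,P')`, and Blackwell's theorem is assumed
(whenever `T(P,P') ≤ T(X,X')` there is a kernel carrying `(P,P')` to `(X,X')`, and
likewise for `(Y,Y')`), then there are couplings `(X̃,Ỹ)` of `X,Y` and `(X̃',Ỹ')` of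
`X',Y'` with `T((X̃,Ỹ),(X̃',Ỹ')) ≥ f`. -/
theorem fDP_coupling {ΩX ΩY ΩP : Type*} [Fintype ΩX] [Fintype ΩY] [Fintype ΩP]
    (f : ℝ → ℝ)
    (X X' : ΩX → ℝ) (hX : IsPMF X) (hX' : IsPMF X')
    (Y Y' : ΩY → ℝ) (hY : IsPMF Y) (hY' : IsPMF Y')
    (P P' : ΩP → ℝ) (hP : IsPMF P) (hP' : IsPMF P')
    -- `f` is realized as the trade-off function of the pair `(P, P')`
    (hfP : ∀ α ∈ Set.Icc (0:ℝ) 1, f α = tradeoff P P' α)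
    -- `T(X,X') ≥ f` and `T(Y,Y') ≥ f`
    (hfX : ∀ α ∈ Set.Icc (0:ℝ) 1, f α ≤ tradeoff X X' α)
    (hfY : ∀ α ∈ Set.Icc (0:ℝ) 1, f α ≤ tradeoff Y Y' α)
    -- Blackwell's theorem, assumed for the two relevant pairs
    (hBlackwellX : (∀ α ∈ Set.Icc (0:ℝ) 1, tradeoff P P' α ≤ tradeoff X X' α) →
      ∃ K : ΩP → ΩX → ℝ, IsKernel K ∧ push K P = X ∧ push K P' = X')
    (hBlackwellY : (∀ α ∈ Set.Icc (0:ℝ) 1, tradeoff P P' α ≤ tradeoff Y Y' α) →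
      ∃ K : ΩP → ΩY → ℝ, IsKernel K ∧ push K P = Y ∧ push K P' = Y') :
    ∃ W W' : ΩX × ΩY → ℝ, IsPMF W ∧ IsPMF W' ∧
      -- `W` is a coupling of `X` and `Y`
      (∀ x, ∑ y, W (x, y) = X x) ∧ (∀ y, ∑ x, W (x, y) = Y y) ∧
      -- `W'` is a coupling of `X'` and `Y'`
      (∀ x, ∑ y, W' (x, y) = X' x) ∧ (∀ y, ∑ x, W' (x, y) = Y' y) ∧
      -- `T((X̃,Ỹ), (X̃',Ỹ')) ≥ f`
      (∀ α ∈ Set.Icc (0:ℝ) 1, f α ≤ tradeoff W W' α) :=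
  fDP_coupling_general f X X' Y Y' P P' hP hP' hfP hfX hfY hBlackwellX hBlackwellY
end
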